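/- arXiv:1609.00763 — 3 statements merged into one kernel-verified Lean document; each statement's English description precedes it below -/
import Mathlib

section
/- Let k ≥ 4 and let T be an n-vertex GDP-tree with maximum degree Δ(T) ≤ k−1 that does not contain the complete graph K_k as a subgraph. Then 2|E(T)| ≤ (k − 2 + 2/(k−1))·n. -/
/-!
Induction on the number of vertices, run over the induced subgraphs `T[A]`. A graph with an edge
has an end block `B`: a block in which at most one vertex `x` has neighbours outside `B`. It is
found by walking from block to block away from a cut vertex; the set of vertices behind the cut
vertex shrinks at each step. In a GDP-tree `B` is a clique or a cycle (a sub-block of a cycle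
block is an edge), a triangle counts as a clique, and a clique has at most `k - 1` vertices.
With `c = k - 2 + 2 / (k - 1)`, deleting `B \ {x}` from a cycle of length `m ≥ 4` costs
`2m ≤ c (m - 1)`, deleting it from a clique on `m ≤ k - 2` vertices costs
`m (m - 1) ≤ c (m - 1)`, and a clique on `k - 1` vertices is deleted entirely: as `Δ ≤ k - 1`,
its vertex `x` has at most one neighbour outside, and `(k - 1)(k - 2) + 2 = c (k - 1)`.
-/

open scoped Classical

/-- A simple graph is a cycle iff it is connected and every vertex has exactly two neighbors. -/
def IsCycleGraph {α : Type} (S : SimpleGraph α) : Prop :=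
  S.Connected ∧ ∀ v, {u | S.Adj v u}.ncard = 2

/-- `S[B]` is connected and has no cut vertex. -/
def SGNonseparable {V : Type} (S : SimpleGraph V) (B : Set V) : Prop :=
  B.Nonempty ∧ (S.induce B).Connected ∧
    ∀ v ∈ B, (S.induce (B \ {v})).Preconnected

/-- A block of a simple graph: a maximal vertex set inducing a connected subgraph with no
cut vertex. -/
def SGIsBlock {V : Type} (S : SimpleGraph V) (B : Set V) : Prop :=
  SGNonseparable S B ∧ ∀ B', B ⊆ B' → SGNonseparable S B' → B' = B

section

open SimpleGraph

variable {V : Type}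

def ReachIn (H : SimpleGraph V) (X : Set V) (a b : V) : Prop :=
  ∃ p : H.Walk a b, ∀ z ∈ p.support, z ∈ X

def PreconnectedIn (H : SimpleGraph V) (X : Set V) : Prop :=
  ∀ a ∈ X, ∀ b ∈ X, ReachIn H X a b

namespace ReachIn

variable {H : SimpleGraph V} {X Y : Set V} {a b c : V}

lemma right_mem (h : ReachIn H X a b) : b ∈ X :=
  h.elim fun p hp => hp _ p.end_mem_support

lemma refl (ha : a ∈ X) : ReachIn H X a a :=
  ⟨.nil, by simpa using ha⟩

lemma symm (h : ReachIn H X a b) : ReachIn H X b a :=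
  h.elim fun p hp => ⟨p.reverse, by simpa using hp⟩

lemma trans (h : ReachIn H X a b) (h' : ReachIn H X b c) : ReachIn H X a c := by
  obtain ⟨p, hp⟩ := h
  obtain ⟨q, hq⟩ := h'
  refine ⟨p.append q, fun z hz => ?_⟩
  rcases Walk.mem_support_append_iff p q |>.1 hz with hz | hz
  exacts [hp z hz, hq z hz]

lemma mono (hXY : X ⊆ Y) (h : ReachIn H X a b) : ReachIn H Y a b :=
  h.elim fun p hp => ⟨p, fun z hz => hXY (hp z hz)⟩

lemma of_adj (h : H.Adj a b) (ha : a ∈ X) (hb : b ∈ X) : ReachIn H X a b :=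
  ⟨h.toWalk, by simp [ha, hb]⟩

lemma of_mem_support (p : H.Walk a b) {c : V} (hc : c ∈ p.support) :
    ReachIn H {z | z ∈ p.support} c a :=
  ⟨(p.takeUntil c hc).reverse, fun z hz =>
    p.support_takeUntil_subset_support hc (by simpa using hz)⟩

lemma mem_of_closed {Y : Set V} (h : ReachIn H X a b) (ha : a ∈ Y)
    (hY : ∀ u ∈ Y, ∀ w ∈ X, H.Adj u w → w ∈ Y) : b ∈ Y := by
  obtain ⟨p, hp⟩ := h
  induction p with
  | nil => exact ha
  | @cons u w v huw p ih =>
    exact ih (hY u ha w (hp _ (by simp)) huw) fun z hz => hp z (by simp [hz])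

end ReachIn

namespace PreconnectedIn

variable {H : SimpleGraph V} {X Y : Set V}

lemma of_subsingleton (hX : X.Subsingleton) : PreconnectedIn H X :=
  fun _ ha _ hb => hX ha hb ▸ ReachIn.refl ha

lemma of_reachIn_subset (hX : PreconnectedIn H X) (hXY : X ⊆ Y)
    (hreach : ∀ a ∈ Y, ∃ e ∈ X, ReachIn H Y a e) : PreconnectedIn H Y := by
  intro a ha b hb
  obtain ⟨e, he, hae⟩ := hreach a ha
  obtain ⟨f, hf, hbf⟩ := hreach b hb
  exact hae.trans ((hX e he f hf).mono hXY |>.trans hbf.symm)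

lemma union (hX : PreconnectedIn H X) (hY : PreconnectedIn H Y) {c : V} (hc : c ∈ X ∩ Y) :
    PreconnectedIn H (X ∪ Y) := by
  refine of_reachIn_subset hX Set.subset_union_left fun a ha => ⟨c, hc.1, ?_⟩
  rcases ha with ha | ha
  · exact (hX a ha c hc.1).mono Set.subset_union_left
  · exact (hY a ha c hc.2).mono Set.subset_union_right

end PreconnectedIn

lemma induce_preconnected_iff {H : SimpleGraph V} {X : Set V} :
    (H.induce X).Preconnected ↔ PreconnectedIn H X := by
  constructor
  · intro h a ha b hb
    obtain ⟨p⟩ := h ⟨a, ha⟩ ⟨b, hb⟩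
    refine ⟨p.map ⟨Subtype.val, fun h => h⟩, fun z hz => ?_⟩
    rw [Walk.support_map] at hz
    obtain ⟨z', -, rfl⟩ := List.mem_map.1 hz
    exact z'.2
  · rintro h ⟨a, ha⟩ ⟨b, hb⟩
    obtain ⟨_, hreach⟩ := (h a ha b hb).mem_of_closed
      (Y := {z | ∃ hz : z ∈ X, (H.induce X).Reachable ⟨a, ha⟩ ⟨z, hz⟩}) ⟨ha, .rfl⟩
      fun _ ⟨_, hreach⟩ w hw huw => ⟨hw, hreach.trans (Adj.reachable (G := H.induce X) huw)⟩
    exact hreach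

lemma sgNonseparable_iff {H : SimpleGraph V} {B : Set V} :
    SGNonseparable H B ↔
      B.Nonempty ∧ PreconnectedIn H B ∧ ∀ v, PreconnectedIn H (B \ {v}) := by
  simp only [SGNonseparable, connected_iff, induce_preconnected_iff, Set.nonempty_coe_sort]
  refine ⟨fun ⟨hne, ⟨hB, _⟩, hcut⟩ => ⟨hne, hB, fun v => ?_⟩,
    fun ⟨hne, hB, hcut⟩ => ⟨hne, ⟨hB, hne⟩, fun v _ => hcut v⟩⟩
  by_cases hv : v ∈ B
  · exact hcut v hv
  · rwa [Set.sdiff_singleton_eq_self hv]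

lemma preconnectedIn_support {H : SimpleGraph V} {u v : V} (p : H.Walk u v) :
    PreconnectedIn H {z | z ∈ p.support} :=
  fun _ ha _ hb => (ReachIn.of_mem_support p ha).trans (ReachIn.of_mem_support p hb).symm

lemma ReachIn.exists_adj_of_ne {H : SimpleGraph V} {X : Set V} {a b : V}
    (h : ReachIn H X a b) (hab : a ≠ b) : ∃ w ∈ X, H.Adj a w := by
  obtain ⟨p, hp⟩ := h
  cases p with
  | nil => exact absurd rfl hab
  | cons h' p => exact ⟨_, hp _ (by simp), h'⟩

namespace SimpleGraph.Walk.IsPath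

variable {H : SimpleGraph V} {u v a w : V} {p : H.Walk u v}

lemma eq_of_mem_support_takeUntil_of_mem_support_dropUntil (hp : p.IsPath)
    (ha : a ∈ p.support) (h₁ : w ∈ (p.takeUntil a ha).support)
    (h₂ : w ∈ (p.dropUntil a ha).support) : w = a := by
  have hnd := hp.support_nodup
  rw [← p.take_spec ha, support_append] at hnd
  rw [← cons_tail_support] at h₂
  exact (List.mem_cons.1 h₂).resolve_right (List.disjoint_of_nodup_append hnd h₁)

lemma reachIn_start_or_end (hp : p.IsPath) (ha : a ∈ p.support) (haw : a ≠ w) :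
    ReachIn H ({z | z ∈ p.support} \ {w}) a u ∨
      ReachIn H ({z | z ∈ p.support} \ {w}) a v := by
  by_cases hw : w ∈ (p.takeUntil a ha).support
  · refine .inr ⟨p.dropUntil a ha,
      fun z hz => ⟨p.support_dropUntil_subset_support ha hz, ?_⟩⟩
    rintro rfl
    exact haw (hp.eq_of_mem_support_takeUntil_of_mem_support_dropUntil ha hw hz).symm
  · refine .inl ⟨(p.takeUntil a ha).reverse, fun z hz => ?_⟩
    rw [support_reverse, List.mem_reverse] at hz
    exact ⟨p.support_takeUntil_subset_support ha hz, by rintro rfl; exact hw hz⟩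

end SimpleGraph.Walk.IsPath

namespace SGNonseparable

variable {H : SimpleGraph V} {B B₁ B₂ : Set V} {a b u v : V}

lemma pair (h : H.Adj a b) : SGNonseparable H {a, b} := by
  have hab : PreconnectedIn H {a, b} :=
    induce_preconnected_iff.1 (induce_pair_connected_of_adj h).preconnected
  refine sgNonseparable_iff.2 ⟨⟨a, by simp⟩, hab, fun v => ?_⟩
  by_cases hv : v = a ∨ v = b
  · refine .of_subsingleton fun x hx y hy => ?_
    simp only [Set.mem_sdiff, Set.mem_insert_iff, Set.mem_singleton_iff] at hx hy
    grind
  · rwa [Set.sdiff_singleton_eq_self (by simpa [eq_comm] using hv)]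

lemma union (h₁ : SGNonseparable H B₁) (h₂ : SGNonseparable H B₂) (ha : a ∈ B₁ ∩ B₂)
    (hb : b ∈ B₁ ∩ B₂) (hab : a ≠ b) : SGNonseparable H (B₁ ∪ B₂) := by
  rw [sgNonseparable_iff] at *
  refine ⟨h₁.1.mono Set.subset_union_left, h₁.2.1.union h₂.2.1 ha, fun v => ?_⟩
  rw [Set.union_sdiff_distrib]
  by_cases hav : a = v
  · have hbv : b ≠ v := hav ▸ hab.symm
    exact (h₁.2.2 v).union (h₂.2.2 v) (c := b) ⟨⟨hb.1, hbv⟩, ⟨hb.2, hbv⟩⟩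
  · exact (h₁.2.2 v).union (h₂.2.2 v) (c := a) ⟨⟨ha.1, hav⟩, ⟨ha.2, hav⟩⟩

lemma union_support (h : SGNonseparable H B) (hu : u ∈ B) (hv : v ∈ B) {p : H.Walk u v}
    (hp : p.IsPath) : SGNonseparable H (B ∪ {z | z ∈ p.support}) := by
  rw [sgNonseparable_iff] at *
  refine ⟨h.1.mono Set.subset_union_left,
    h.2.1.union (preconnectedIn_support p) ⟨hu, p.start_mem_support⟩, fun w => ?_⟩
  refine (h.2.2 w).of_reachIn_subset (Set.sdiff_subset_sdiff_left Set.subset_union_left)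
    fun a ha => ?_
  by_cases haB : a ∈ B
  · exact ⟨a, ⟨haB, ha.2⟩, .refl ha⟩
  have haS : a ∈ p.support := ha.1.resolve_left haB
  have hmono : {z | z ∈ p.support} \ {w} ⊆ (B ∪ {z | z ∈ p.support}) \ {w} :=
    Set.sdiff_subset_sdiff_left Set.subset_union_right
  rcases hp.reachIn_start_or_end haS ha.2 with hreach | hreach
  · exact ⟨u, ⟨hu, hreach.right_mem.2⟩, hreach.mono hmono⟩
  · exact ⟨v, ⟨hv, hreach.right_mem.2⟩, hreach.mono hmono⟩

lemma exists_adj_ne [Finite V] (h : SGNonseparable H B) (h3 : 3 ≤ B.ncard) (hv : v ∈ B) :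
    ∃ x ∈ B, ∃ y ∈ B, x ≠ y ∧ H.Adj v x ∧ H.Adj v y := by
  rw [sgNonseparable_iff] at h
  obtain ⟨b, hb, hbv⟩ := Set.exists_ne_of_one_lt_ncard (by omega : 1 < B.ncard) v
  obtain ⟨x, hx, hvx⟩ := (h.2.1 v hv b hb).exists_adj_of_ne hbv.symm
  obtain ⟨c, ⟨hc, hcv⟩, hcx⟩ := Set.exists_ne_of_one_lt_ncard
    (by rw [Set.ncard_sdiff_singleton_of_mem hv]; omega : 1 < (B \ {v}).ncard) x
  obtain ⟨y, hy, hvy⟩ :=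
    (h.2.2 x v ⟨hv, hvx.ne⟩ c ⟨hc, hcx⟩).exists_adj_of_ne (Ne.symm hcv)
  exact ⟨x, hx, y, hy.1, Ne.symm hy.2, hvx, hvy⟩

end SGNonseparable

lemma exists_sgIsBlock_superset [Finite V] {H : SimpleGraph V} {C : Set V}
    (h : SGNonseparable H C) : ∃ B, SGIsBlock H B ∧ C ⊆ B := by
  obtain ⟨B, ⟨hCB, hB⟩, hmax⟩ := Set.Finite.exists_maximalFor (fun B => B.ncard)
    {B | C ⊆ B ∧ SGNonseparable H B} (Set.toFinite _) ⟨C, subset_rfl, h⟩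
  refine ⟨B, ⟨hB, fun B' hBB' hB' => ?_⟩, hCB⟩
  exact (Set.eq_of_subset_of_ncard_le hBB'
    (hmax ⟨hCB.trans hBB', hB'⟩ (Set.ncard_le_ncard hBB'))).symm

lemma SimpleGraph.Walk.exists_mem_support_ne_ne {H : SimpleGraph V} {u v : V} (p : H.Walk u v)
    (huv : u ≠ v) (hp : s(u, v) ∉ p.edges) : ∃ c ∈ p.support, c ≠ u ∧ c ≠ v := by
  cases p with
  | nil => exact absurd rfl huv
  | @cons _ c _ h q =>
    refine ⟨c, by simp, h.ne.symm, ?_⟩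
    rintro rfl
    exact hp (by simp)

namespace SGIsBlock

variable {H : SimpleGraph V} {B B' : Set V} {a b u v : V}

lemma eq_of_mem_of_mem (hB : SGIsBlock H B) (hB' : SGIsBlock H B') (ha : a ∈ B ∩ B')
    (hb : b ∈ B ∩ B') (hab : a ≠ b) : B = B' := by
  have hU := hB.1.union hB'.1 ha hb hab
  exact (hB.2 _ Set.subset_union_left hU).symm.trans (hB'.2 _ Set.subset_union_right hU)

lemma support_subset (hB : SGIsBlock H B) (hu : u ∈ B) (hv : v ∈ B) {p : H.Walk u v}
    (hp : p.IsPath) : {z | z ∈ p.support} ⊆ B :=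
  Set.union_eq_left.1 (hB.2 _ Set.subset_union_left (hB.1.union_support hu hv hp))

lemma mem_edges_of_walk (hB : SGIsBlock H B) (hu : u ∈ B) (hv : v ∈ B) (huv : u ≠ v)
    (W : H.Walk u v) (hW : ∀ z ∈ W.support, z ∈ B → z = u ∨ z = v) :
    s(u, v) ∈ W.edges := by
  by_contra hWuv
  obtain ⟨c, hc, hcu, hcv⟩ := W.bypass.exists_mem_support_ne_ne huv
    fun h => hWuv (W.edges_bypass_subset_edges h)
  rcases hW c (W.support_bypass_subset_support hc) (hB.support_subset hu hv W.bypass_isPath hc)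
    with rfl | rfl
  exacts [hcu rfl, hcv rfl]

end SGIsBlock

def attachments (H : SimpleGraph V) (B : Set V) : Set V :=
  {u | u ∈ B ∧ ∃ v, v ∉ B ∧ H.Adj u v}

def branch (H : SimpleGraph V) (B : Set V) (y : V) : Set V :=
  {v | v ∉ B ∧ ReachIn H (insert y Bᶜ) y v}

section EndBlock

variable {H : SimpleGraph V} {B B' : Set V} {t w y y' z : V}

/-- Otherwise a walk from `y` through the branch back into `B` would enlarge the block. -/
lemma adj_mem_branch (hB : SGIsBlock H B) (hy : y ∈ B) (ht : t ∈ branch H B y)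
    (htw : H.Adj t w) (hwy : w ≠ y) : w ∈ branch H B y := by
  obtain ⟨htB, P, hP⟩ := ht
  by_cases hwB : w ∈ B
  · have hwP : w ∉ P.support := fun h => (hP w h).elim hwy (· hwB)
    refine absurd (hB.mem_edges_of_walk hy hwB hwy.symm (P.concat htw) fun z hz hzB => ?_) ?_
    · simp only [Walk.support_concat, List.mem_append, List.mem_singleton] at hz
      rcases hz with hz | rfl
      · exact .inl ((hP z hz).resolve_right (· hzB))
      · exact .inr rfl
    · simp only [Walk.edges_concat, List.concat_eq_append, List.mem_append, List.mem_singleton,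
        Sym2.congr_left]
      rintro (h | rfl)
      exacts [hwP (P.snd_mem_support_of_mem_edges h), htB hy]
  · refine ⟨hwB, ⟨P.concat htw, fun z hz => ?_⟩⟩
    simp only [Walk.support_concat, List.mem_append, List.mem_singleton] at hz
    rcases hz with hz | rfl
    exacts [hP z hz, .inr hwB]

lemma branch_subset (hB : SGIsBlock H B) (hy : y ∈ B) (hyB' : y ∈ B') (hz : z ∈ branch H B y)
    (hzB' : z ∈ B') (hzy : z ≠ y) : branch H B' z ⊆ branch H B y \ {z} := by
  rintro v ⟨hvB', hv⟩
  refine ⟨hv.mem_of_closed hz fun t ht w hw htw => adj_mem_branch hB hy ht htw ?_, ?_⟩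
  · rintro rfl
    exact (hw.elim hzy.symm) (· hyB')
  · rintro rfl
    exact hvB' hzB'

lemma sdiff_subset_branch (hB : SGIsBlock H B) (hB' : SGIsBlock H B') (hy : y ∈ B ∩ B')
    (hy' : y' ∈ B' \ B) (hadj : H.Adj y y') : B' \ {y} ⊆ branch H B y := by
  have hout : B' \ {y} ⊆ Bᶜ := fun w hw hwB =>
    hy'.2 (hB.eq_of_mem_of_mem hB' hy ⟨hwB, hw.1⟩ (Ne.symm hw.2) ▸ hy'.1)
  have hyy' : y' ≠ y := fun h => hy'.2 (h ▸ hy.1)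
  intro w hw
  refine ⟨hout hw,
    (ReachIn.of_adj hadj (Set.mem_insert y _) (.inr (hout ⟨hy'.1, hyy'⟩))).trans ?_⟩
  exact ((sgNonseparable_iff.1 hB'.1).2.2 y y' ⟨hy'.1, hyy'⟩ w hw).mono
    (hout.trans (Set.subset_insert y _))

variable [Finite V]

lemma exists_endBlock_of_mem_attachments (hB : SGIsBlock H B) (hy : y ∈ attachments H B) :
    ∃ B', SGIsBlock H B' ∧ 2 ≤ B'.ncard ∧ ∃ x ∈ B', attachments H B' ⊆ {x} := by
  induction hn : (branch H B y).ncard using Nat.strong_induction_on generalizing B y with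
  | _ n IH =>
  obtain ⟨hyB, y', hy'B, hadj⟩ := hy
  obtain ⟨B', hB', hsub⟩ := exists_sgIsBlock_superset (SGNonseparable.pair hadj)
  have hyB' : y ∈ B' := hsub (by simp)
  have h2 : 2 ≤ B'.ncard := Set.ncard_pair hadj.ne ▸ Set.ncard_le_ncard hsub
  by_cases hend : attachments H B' ⊆ {y}
  · exact ⟨B', hB', h2, y, hyB', hend⟩
  obtain ⟨z, hz, hzy⟩ := Set.not_subset.1 hend
  have hzbr : z ∈ branch H B y :=
    sdiff_subset_branch hB hB' ⟨hyB, hyB'⟩ ⟨hsub (by simp), hy'B⟩ hadj ⟨hz.1, hzy⟩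
  refine IH _ ?_ hB' hz rfl
  calc (branch H B' z).ncard ≤ (branch H B y \ {z}).ncard :=
        Set.ncard_le_ncard (branch_subset hB hyB hyB' hzbr hz.1 hzy)
    _ < n := hn ▸ Set.ncard_sdiff_singleton_lt_of_mem hzbr

lemma exists_endBlock {u v : V} (huv : H.Adj u v) :
    ∃ B, SGIsBlock H B ∧ 2 ≤ B.ncard ∧ ∃ x ∈ B, attachments H B ⊆ {x} := by
  obtain ⟨B, hB, hsub⟩ := exists_sgIsBlock_superset (SGNonseparable.pair huv)
  by_cases hend : attachments H B ⊆ {u}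
  · exact ⟨B, hB, Set.ncard_pair huv.ne ▸ Set.ncard_le_ncard hsub, u, hsub (by simp), hend⟩
  obtain ⟨y, hy, -⟩ := Set.not_subset.1 hend
  exact exists_endBlock_of_mem_attachments hB hy

end EndBlock

/-- The induced subgraph `T[A]`, kept on the whole vertex type: vertices outside `A` become
isolated, so that `T[A]` and `T[A \ D]` live on the same type. -/
def inducedOn (T : SimpleGraph V) (A : Set V) : SimpleGraph V where
  Adj u v := T.Adj u v ∧ u ∈ A ∧ v ∈ A
  symm := ⟨fun _ _ h => ⟨h.1.symm, h.2.2, h.2.1⟩⟩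
  loopless := ⟨fun v h => T.loopless.irrefl v h.1⟩

section InducedOn

variable {T : SimpleGraph V} {A B C : Set V} {v : V}

lemma induce_inducedOn (hBA : B ⊆ A) : (inducedOn T A).induce B = T.induce B := by
  ext u w
  simp [inducedOn, hBA u.2, hBA w.2]

lemma sgNonseparable_inducedOn_iff (hBA : B ⊆ A) :
    SGNonseparable (inducedOn T A) B ↔ SGNonseparable T B := by
  have h v : (inducedOn T A).induce (B \ {v}) = T.induce (B \ {v}) :=
    induce_inducedOn (Set.sdiff_subset.trans hBA)
  simp only [SGNonseparable, induce_inducedOn hBA, h]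

lemma SGNonseparable.subset_of_inducedOn [Finite V] (h : SGNonseparable (inducedOn T A) B)
    (h2 : 2 ≤ B.ncard) : B ⊆ A := by
  intro u hu
  obtain ⟨b, hb, hbu⟩ := Set.exists_ne_of_one_lt_ncard (by omega : 1 < B.ncard) u
  obtain ⟨w, -, huw⟩ := ((sgNonseparable_iff.1 h).2.1 u hu b hb).exists_adj_of_ne hbu.symm
  exact huw.2.1

lemma SGNonseparable.isClique_of_ncard_eq_two (h : SGNonseparable T B) (h2 : B.ncard = 2) :
    T.IsClique B := by
  obtain ⟨a, b, hab, rfl⟩ := Set.ncard_eq_two.1 h2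
  refine isClique_pair.2 fun _ => ?_
  obtain ⟨w, hw, haw⟩ :=
    ((sgNonseparable_iff.1 h).2.1 a (by simp) b (by simp)).exists_adj_of_ne hab
  rcases hw with rfl | rfl
  exacts [absurd haw (T.loopless.irrefl _), haw]

lemma IsCycleGraph.ncard_adj (hC : IsCycleGraph (T.induce C)) (hv : v ∈ C) :
    {u | u ∈ C ∧ T.Adj v u}.ncard = 2 := by
  rw [← hC.2 ⟨v, hv⟩, ← Set.ncard_image_of_injective _ Subtype.val_injective]
  congr 1
  ext u
  simp [and_comm]

lemma adj_subset_sdiff (v : V) : {u | u ∈ C ∧ T.Adj v u} ⊆ C \ {v} :=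
  fun _ hu => ⟨hu.1, fun h => T.loopless.irrefl v (h ▸ hu.2)⟩

variable [Finite V]

lemma IsCycleGraph.isClique_of_ncard_eq_three (hC : IsCycleGraph (T.induce C))
    (h3 : C.ncard = 3) : T.IsClique C := by
  intro u hu w hw huw
  have heq : {x | x ∈ C ∧ T.Adj u x} = C \ {u} := Set.eq_of_subset_of_ncard_le
    (adj_subset_sdiff u) (by rw [hC.ncard_adj hu, Set.ncard_sdiff_singleton_of_mem hu, h3])
  have hw' : w ∈ C \ {u} := ⟨hw, Ne.symm huw⟩
  rw [← heq] at hw'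
  exact hw'.2

lemma SGNonseparable.eq_of_subset_isCycleGraph (h : SGNonseparable T B) (h3 : 3 ≤ B.ncard)
    (hBC : B ⊆ C) (hC : IsCycleGraph (T.induce C)) : B = C := by
  have hclosed : ∀ v ∈ B, ∀ u ∈ C, T.Adj v u → u ∈ B := by
    intro v hv u hu hvu
    obtain ⟨x, hx, y, hy, hxy, hvx, hvy⟩ := h.exists_adj_ne h3 hv
    have hnbrs : {x, y} = {u | u ∈ C ∧ T.Adj v u} := Set.eq_of_subset_of_ncard_le
      (by rintro _ (rfl | rfl) <;> simp_all [hBC hx, hBC hy])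
      (by rw [hC.ncard_adj (hBC hv), Set.ncard_pair hxy])
    rcases (hnbrs ▸ ⟨hu, hvu⟩ : u ∈ ({x, y} : Set V)) with rfl | rfl
    exacts [hx, hy]
  obtain ⟨b, hb⟩ := h.1
  refine hBC.antisymm fun c hc => ?_
  exact (induce_preconnected_iff.1 hC.1.preconnected b (hBC hb) c hc).mem_of_closed hb hclosed

lemma SGIsBlock.isClique_or_isCycleGraph_of_inducedOn (hB : SGIsBlock (inducedOn T A) B)
    (hGDP : ∀ B : Set V, SGIsBlock T B →
      (∀ u ∈ B, ∀ v ∈ B, u ≠ v → T.Adj u v) ∨ IsCycleGraph (T.induce B))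
    (h2 : 2 ≤ B.ncard) :
    B ⊆ A ∧ (T.IsClique B ∨ IsCycleGraph (T.induce B) ∧ 4 ≤ B.ncard) := by
  have hBA := hB.1.subset_of_inducedOn h2
  have hBT : SGNonseparable T B := (sgNonseparable_inducedOn_iff hBA).1 hB.1
  obtain ⟨C, hC, hBC⟩ := exists_sgIsBlock_superset hBT
  refine ⟨hBA, ?_⟩
  rcases hGDP C hC with hclique | hcycle
  · exact .inl (IsClique.subset hBC hclique)
  rcases (by omega : B.ncard = 2 ∨ 3 ≤ B.ncard) with h2 | h3
  · exact .inl (hBT.isClique_of_ncard_eq_two h2)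
  obtain rfl := hBT.eq_of_subset_isCycleGraph h3 hBC hcycle
  rcases (by omega : B.ncard = 3 ∨ 4 ≤ B.ncard) with h3 | h4
  · exact .inl (hcycle.isClique_of_ncard_eq_three h3)
  · exact .inr ⟨hcycle, h4⟩

end InducedOn

section Counting

variable [Fintype V] {T : SimpleGraph V} {A B C D : Set V} {v : V}

lemma ncard_neighborSet_eq_degree (G : SimpleGraph V) (v : V) :
    (G.neighborSet v).ncard = G.degree v := by
  rw [Set.ncard_eq_toFinset_card', ← neighborFinset_def]
  rfl

lemma degree_inducedOn (hv : v ∈ B) :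
    (inducedOn T B).degree v = {u | u ∈ B ∧ T.Adj v u}.ncard := by
  rw [← ncard_neighborSet_eq_degree]
  congr 1
  ext u
  simp [inducedOn, hv, and_comm]

lemma sum_degree_inducedOn :
    ∑ v ∈ B.toFinset, (inducedOn T B).degree v = 2 * (inducedOn T B).edgeFinset.card := by
  rw [← sum_degrees_eq_twice_card_edges]
  refine Finset.sum_subset (Finset.subset_univ _) fun v _ hv => ?_
  rw [← ncard_neighborSet_eq_degree, Set.ncard_eq_zero]
  exact Set.eq_empty_of_forall_notMem fun u hu => hv (Set.mem_toFinset.2 hu.2.1)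

lemma two_mul_card_edgeFinset_inducedOn_le :
    2 * ((inducedOn T B).edgeFinset.card : ℝ) ≤ B.ncard * ((B.ncard : ℝ) - 1) := by
  have h : 2 * (inducedOn T B).edgeFinset.card ≤ B.ncard * (B.ncard - 1) := by
    rw [← sum_degree_inducedOn, Set.ncard_eq_toFinset_card', ← smul_eq_mul]
    refine Finset.sum_le_card_nsmul _ _ _ fun v hv => ?_
    rw [Set.mem_toFinset] at hv
    rw [degree_inducedOn hv, ← Set.ncard_eq_toFinset_card',
      ← Set.ncard_sdiff_singleton_of_mem hv]
    exact Set.ncard_le_ncard (adj_subset_sdiff v)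
  have hcast := (Nat.cast_le (α := ℝ)).2 h
  rcases Nat.eq_zero_or_pos B.ncard with h0 | hpos
  · rw [h0] at hcast ⊢
    simpa using hcast
  · push_cast [Nat.cast_sub hpos] at hcast
    exact hcast

lemma IsCycleGraph.card_edgeFinset_inducedOn (hC : IsCycleGraph (T.induce C)) :
    (inducedOn T C).edgeFinset.card = C.ncard := by
  have h := sum_degree_inducedOn (T := T) (B := C)
  rw [Finset.sum_congr rfl fun v hv => (degree_inducedOn (Set.mem_toFinset.1 hv)).trans
    (hC.ncard_adj (Set.mem_toFinset.1 hv)), Finset.sum_const, smul_eq_mul,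
    ← Set.ncard_eq_toFinset_card'] at h
  omega

lemma card_edgeFinset_inducedOn_le (hDB : D ⊆ B) (x : V) (W : Finset V)
    (hD : ∀ d ∈ D, ∀ w, (inducedOn T A).Adj d w → w ∈ B ∨ d = x ∧ w ∈ W) :
    (inducedOn T A).edgeFinset.card ≤
      (inducedOn T (A \ D)).edgeFinset.card + (inducedOn T B).edgeFinset.card + W.card := by
  have hmeet : ∀ d w, (inducedOn T A).Adj d w → d ∈ D →
      s(d, w) ∈ (inducedOn T B).edgeFinset ∨ s(d, w) ∈ W.image (s(x, ·)) := by
    intro d w hdw hd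
    rcases hD d hd w hdw with hw | ⟨rfl, hw⟩
    · exact .inl (mem_edgeFinset.2 ⟨hdw.1, hDB hd, hw⟩)
    · exact .inr (Finset.mem_image_of_mem _ hw)
  have hsub : (inducedOn T A).edgeFinset ⊆ (inducedOn T (A \ D)).edgeFinset ∪
      (inducedOn T B).edgeFinset ∪ W.image (s(x, ·)) := by
    intro e he
    induction e using Sym2.ind with
    | _ u w =>
    have huw : (inducedOn T A).Adj u w := mem_edgeFinset.1 he
    simp only [Finset.mem_union]
    by_cases hu : u ∈ D
    · rcases hmeet u w huw hu with h | h <;> simp [h]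
    by_cases hw : w ∈ D
    · rw [Sym2.eq_swap]
      rcases hmeet w u huw.symm hw with h | h <;> simp [h]
    exact .inl (.inl (mem_edgeFinset.2 ⟨huw.1, ⟨huw.2.1, hu⟩, ⟨huw.2.2, hw⟩⟩))
  calc _ ≤ _ := Finset.card_le_card hsub
    _ ≤ _ := (Finset.card_union_le _ _).trans
      (add_le_add (Finset.card_union_le _ _) Finset.card_image_le)

end Counting

noncomputable def gallaiBound (k : ℕ) : ℝ :=
  (k : ℝ) - 2 + 2 / ((k : ℝ) - 1)

section Arithmetic

variable {k : ℕ}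

lemma sub_two_le_gallaiBound (hk : 2 ≤ k) : (k : ℝ) - 2 ≤ gallaiBound k := by
  have : (1 : ℝ) ≤ k - 1 := by
    have : (2 : ℝ) ≤ k := by exact_mod_cast hk
    linarith
  have : 0 ≤ 2 / ((k : ℝ) - 1) := by positivity
  unfold gallaiBound
  linarith

lemma gallaiBound_mul_sub_one (hk : 2 ≤ k) :
    gallaiBound k * ((k : ℝ) - 1) = ((k : ℝ) - 1) * ((k : ℝ) - 2) + 2 := by
  have : (k : ℝ) - 1 ≠ 0 := by
    have : (2 : ℝ) ≤ k := by exact_mod_cast hk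
    linarith
  unfold gallaiBound
  field_simp

/-- `gallaiBound` is smallest at `k = 4`, where it equals `8 / 3`. -/
lemma eight_div_three_le_gallaiBound (hk : 4 ≤ k) : 8 / 3 ≤ gallaiBound k := by
  have hk' : (4 : ℝ) ≤ k := by exact_mod_cast hk
  have hmul := gallaiBound_mul_sub_one (by omega : 2 ≤ k)
  by_contra! hlt
  nlinarith [mul_lt_mul_of_pos_right hlt (by linarith : (0 : ℝ) < k - 1)]

end Arithmetic

section Main

variable [Fintype V] {T : SimpleGraph V} {A B : Set V} {k : ℕ} {x : V}

lemma SimpleGraph.IsClique.ncard_lt (hB : T.IsClique B) (hfree : T.CliqueFree k) :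
    B.ncard < k := by
  by_contra! hk
  rw [Set.ncard_eq_toFinset_card'] at hk
  obtain ⟨t, hts, rfl⟩ := Finset.exists_subset_card_eq hk
  exact hfree t ⟨hB.subset fun y hy => Set.mem_toFinset.1 (hts hy), rfl⟩

lemma SimpleGraph.IsClique.ncard_neighborSet_sdiff_add_le (hB : T.IsClique B) (hx : x ∈ B) :
    (T.neighborSet x \ B).ncard + (B.ncard - 1) ≤ (T.neighborSet x).ncard := by
  rw [← Set.ncard_sdiff_singleton_of_mem hx,
    ← Set.ncard_union_eq (Set.disjoint_sdiff_left.mono_right Set.sdiff_subset)]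
  exact Set.ncard_le_ncard (Set.union_subset Set.sdiff_subset
    fun y hy => hB hx hy.1 (Ne.symm hy.2))

/-- `B` is an end block of `T[A]` with cut vertex `x`, recording only what the counting uses. -/
structure IsPendant (T : SimpleGraph V) (A B : Set V) (x : V) : Prop where
  subset : B ⊆ A
  mem : x ∈ B
  two_le_ncard : 2 ≤ B.ncard
  adj_mem : ∀ d ∈ B, d ≠ x → ∀ w, (inducedOn T A).Adj d w → w ∈ B

lemma exists_isPendant
    (hGDP : ∀ B : Set V, SGIsBlock T B →
      (∀ u ∈ B, ∀ v ∈ B, u ≠ v → T.Adj u v) ∨ IsCycleGraph (T.induce B))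
    {u v : V} (huv : (inducedOn T A).Adj u v) :
    ∃ B x, IsPendant T A B x ∧
      (T.IsClique B ∨ IsCycleGraph (T.induce B) ∧ 4 ≤ B.ncard) := by
  obtain ⟨B, hB, h2, x, hx, hatt⟩ := exists_endBlock huv
  obtain ⟨hBA, hshape⟩ := hB.isClique_or_isCycleGraph_of_inducedOn hGDP h2
  refine ⟨B, x, ⟨hBA, hx, h2, fun d hd hdx w hdw => ?_⟩, hshape⟩
  by_contra hw
  exact hdx (hatt ⟨hd, w, hw, hdw⟩)

lemma two_mul_card_edgeFinset_inducedOn_le_add {D : Set V} (hDB : D ⊆ B) (W : Finset V)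
    (hD : ∀ d ∈ D, ∀ w, (inducedOn T A).Adj d w → w ∈ B ∨ d = x ∧ w ∈ W) {c : ℝ}
    (hc : 2 * ((inducedOn T B).edgeFinset.card + W.card : ℝ) ≤ c * D.ncard) :
    2 * ((inducedOn T A).edgeFinset.card : ℝ) ≤
      2 * (inducedOn T (A \ D)).edgeFinset.card + c * D.ncard := by
  have := card_edgeFinset_inducedOn_le hDB x W hD
  have : ((inducedOn T A).edgeFinset.card : ℝ) ≤ (inducedOn T (A \ D)).edgeFinset.card +
      (inducedOn T B).edgeFinset.card + W.card := by exact_mod_cast this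
  linarith

lemma IsPendant.exists_deletion_of_le (h : IsPendant T A B x) {c : ℝ}
    (hc : 2 * ((inducedOn T B).edgeFinset.card : ℝ) ≤ c * ((B.ncard : ℝ) - 1)) :
    ∃ D ⊆ A, D.Nonempty ∧ 2 * ((inducedOn T A).edgeFinset.card : ℝ) ≤
      2 * (inducedOn T (A \ D)).edgeFinset.card + c * D.ncard := by
  have h2 := h.two_le_ncard
  have hD : ((B \ {x}).ncard : ℝ) = B.ncard - 1 := by
    rw [Set.ncard_sdiff_singleton_of_mem h.mem, Nat.cast_sub (by omega), Nat.cast_one]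
  refine ⟨B \ {x}, Set.sdiff_subset.trans h.subset,
    Set.nonempty_of_ncard_ne_zero (by rw [Set.ncard_sdiff_singleton_of_mem h.mem]; omega), ?_⟩
  refine two_mul_card_edgeFinset_inducedOn_le_add (D := B \ {x}) (x := x) Set.sdiff_subset ∅
    (fun d hd w hdw => .inl (h.adj_mem d hd.1 hd.2 w hdw)) ?_
  simpa [hD] using hc

lemma IsPendant.exists_deletion_of_ncard_eq (h : IsPendant T A B x) (hB : T.IsClique B)
    (hk : 2 ≤ k) (hm : B.ncard = k - 1) (hΔ : ∀ v : V, {u | T.Adj v u}.ncard ≤ k - 1) :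
    ∃ D ⊆ A, D.Nonempty ∧ 2 * ((inducedOn T A).edgeFinset.card : ℝ) ≤
      2 * (inducedOn T (A \ D)).edgeFinset.card + gallaiBound k * D.ncard := by
  set W := (T.neighborSet x \ B).toFinset
  have hW : W.card ≤ 1 := by
    have := hB.ncard_neighborSet_sdiff_add_le h.mem
    have : (T.neighborSet x).ncard ≤ k - 1 := hΔ x
    rw [← Set.ncard_eq_toFinset_card']
    omega
  have hE := two_mul_card_edgeFinset_inducedOn_le (T := T) (B := B)
  rw [hm, Nat.cast_sub (by omega : 1 ≤ k), Nat.cast_one] at hE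
  have hW' : (W.card : ℝ) ≤ 1 := by exact_mod_cast hW
  refine ⟨B, h.subset, ⟨x, h.mem⟩,
    two_mul_card_edgeFinset_inducedOn_le_add (x := x) subset_rfl W (fun d hd w hdw => ?_) ?_⟩
  · by_cases hw : w ∈ B
    · exact .inl hw
    · have hdx : d = x := by_contra fun hdx => hw (h.adj_mem d hd hdx w hdw)
      subst hdx
      exact .inr ⟨rfl, Set.mem_toFinset.2 ⟨hdw.1, hw⟩⟩
  · rw [hm, Nat.cast_sub (by omega : 1 ≤ k), Nat.cast_one, gallaiBound_mul_sub_one hk]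
    linarith

lemma IsPendant.exists_deletion (h : IsPendant T A B x) (hk : 4 ≤ k)
    (hΔ : ∀ v : V, {u | T.Adj v u}.ncard ≤ k - 1) (hfree : T.CliqueFree k)
    (hshape : T.IsClique B ∨ IsCycleGraph (T.induce B) ∧ 4 ≤ B.ncard) :
    ∃ D ⊆ A, D.Nonempty ∧ 2 * ((inducedOn T A).edgeFinset.card : ℝ) ≤
      2 * (inducedOn T (A \ D)).edgeFinset.card + gallaiBound k * D.ncard := by
  rcases hshape with hclique | ⟨hcycle, h4⟩
  · have hlt := hclique.ncard_lt hfree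
    rcases (by omega : B.ncard ≤ k - 2 ∨ B.ncard = k - 1) with hsmall | hfull
    · refine h.exists_deletion_of_le ?_
      have hmk : (B.ncard : ℝ) ≤ gallaiBound k := by
        refine le_trans ?_ (sub_two_le_gallaiBound (by omega))
        rw [le_sub_iff_add_le]
        exact_mod_cast (by omega : B.ncard + 2 ≤ k)
      have hm : (2 : ℝ) ≤ B.ncard := by exact_mod_cast h.two_le_ncard
      nlinarith [two_mul_card_edgeFinset_inducedOn_le (T := T) (B := B)]
    · exact h.exists_deletion_of_ncard_eq hclique (by omega) hfull hΔ
  · refine h.exists_deletion_of_le ?_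
    rw [hcycle.card_edgeFinset_inducedOn]
    have hm : (4 : ℝ) ≤ B.ncard := by exact_mod_cast h4
    nlinarith [eight_div_three_le_gallaiBound hk]

theorem two_mul_card_edgeFinset_inducedOn_le_gallaiBound (hk : 4 ≤ k)
    (hGDP : ∀ B : Set V, SGIsBlock T B →
      (∀ u ∈ B, ∀ v ∈ B, u ≠ v → T.Adj u v) ∨ IsCycleGraph (T.induce B))
    (hΔ : ∀ v : V, {u | T.Adj v u}.ncard ≤ k - 1) (hfree : T.CliqueFree k) (A : Set V) :
    2 * ((inducedOn T A).edgeFinset.card : ℝ) ≤ gallaiBound k * A.ncard := by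
  induction hn : A.ncard using Nat.strong_induction_on generalizing A with
  | _ n IH =>
  subst hn
  by_cases hE : ∃ u v, (inducedOn T A).Adj u v
  · obtain ⟨u, v, huv⟩ := hE
    obtain ⟨B, x, hB, hshape⟩ := exists_isPendant hGDP huv
    obtain ⟨D, hDA, hDne, hdel⟩ := hB.exists_deletion hk hΔ hfree hshape
    have hcard := Set.ncard_sdiff_add_ncard_of_subset hDA
    have hIH := IH _ (by have := (Set.ncard_pos).2 hDne; omega) (A \ D) rfl
    rw [← hcard, Nat.cast_add]
    linarith
  · push Not at hE
    have : (inducedOn T A).edgeFinset = ∅ := edgeFinset_eq_empty.2 <| by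
      ext u v
      simpa using hE u v
    rw [this, Finset.card_empty, Nat.cast_zero, mul_zero]
    have := sub_two_le_gallaiBound (k := k) (by omega)
    have : (4 : ℝ) ≤ k := by exact_mod_cast hk
    exact mul_nonneg (by linarith) (Nat.cast_nonneg _)

end Main

end

/-- **Lemma (Gallai).** Let `k ≥ 4` and let `T` be an `n`-vertex GDP-tree (every block of `T`
is a complete graph or a cycle) with maximum degree at most `k - 1` and with no `K_k`
subgraph. Then `2|E(T)| ≤ (k - 2 + 2/(k-1)) n`. -/
theorem statement14 {V : Type} [Fintype V] (k : ℕ) (hk : 4 ≤ k) (T : SimpleGraph V)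
    (hGDP : ∀ B : Set V, SGIsBlock T B →
      (∀ u ∈ B, ∀ v ∈ B, u ≠ v → T.Adj u v) ∨ IsCycleGraph (T.induce B))
    (hΔ : ∀ v : V, {u | T.Adj v u}.ncard ≤ k - 1)
    (hfree : T.CliqueFree k) :
    (2 * T.edgeFinset.card : ℝ) ≤
      ((k : ℝ) - 2 + 2 / ((k : ℝ) - 1)) * (Fintype.card V : ℝ) := by
  have hT : inducedOn T Set.univ = T := by
    ext u v
    simp [inducedOn]
  have := two_mul_card_edgeFinset_inducedOn_le_gallaiBound hk hGDP hΔ hfree Set.univ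
  rwa [hT, Set.ncard_univ, Nat.card_eq_fintype_card] at this
end

section
/- For all n ≥ 2 and k ≥ 1, the multigraph K_n^k is DP-(k(n−1)+1)-critical: χ_DP(K_n^k) = k(n−1)+1, and every proper sub-multigraph of K_n^k has DP-chromatic number less than k(n−1)+1. -/
/-!
Upper bounds come from greedy coloring: if every nonempty vertex set `T` has a vertex `a` with
fewer than `|L a|` edges into `T`, color `T \ {a}` first and give `a` a color blocked by none of
its neighbors; each colored neighbor `v` blocks at most `e(v, a)` colors. In `K_n^k` every degree
is `k(n-1)`, and in a proper sub-multigraph with lists of size `k(n-1)` either `T` misses a vertex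
or some multiplicity into `T` was lowered.

For the lower bound, cut each list `{v} × [k(n-1)]` into `n - 1` blocks of `k` colors and join
colors of different lists lying in the same block: this is a cover, and a coloring would pick
`n` colors from pairwise distinct blocks.
-/


open scoped Classical

/-- A multigraph on vertex type `V`: a symmetric edge-multiplicity function with no loops. -/
structure Multigraph (V : Type) where
  e : V → V → ℕ
  symm : ∀ u v, e u v = e v u
  loopless : ∀ v, e v v = 0

namespace Multigraph

variable {V : Type}

/-- `u` and `v` are adjacent if they are distinct and joined by at least one edge. -/
def Adj (G : Multigraph V) (u v : V) : Prop := u ≠ v ∧ 1 ≤ G.e u v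

/-- The underlying simple graph of a multigraph. -/
def toSimpleGraph (G : Multigraph V) : SimpleGraph V where
  Adj := G.Adj
  symm := ⟨fun u v h => ⟨Ne.symm h.1, by rw [G.symm]; exact h.2⟩⟩
  loopless := ⟨fun v h => h.1 rfl⟩

/-- The degree of a vertex: the sum of edge multiplicities at it. -/
def deg [Fintype V] (G : Multigraph V) (v : V) : ℕ := ∑ u, G.e v u

/-- The induced sub-multigraph on a set of vertices. -/
def induce (G : Multigraph V) (B : Set V) : Multigraph B where
  e u v := G.e u v
  symm u v := G.symm u v
  loopless v := G.loopless v

/-- A cover `(L, H)` of a multigraph `G`: pairwise disjoint lists `L v` of colors and a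
graph `H` on the union of the lists (given by its adjacency relation `HAdj`), such that each
`L v` spans a clique, every edge of `H` joins colors of a single list or colors of lists of
adjacent vertices, and each color of `L u` has at most `e_G(u,v)` neighbors in `L v`. -/
structure Cover (G : Multigraph V) (C : Type) where
  L : V → Finset C
  HAdj : C → C → Prop
  Hsymm : ∀ x y, HAdj x y → HAdj y x
  Hirrefl : ∀ x, ¬ HAdj x x
  disjoint : ∀ u v, u ≠ v → Disjoint (L u) (L v)
  cliques : ∀ v, ∀ x ∈ L v, ∀ y ∈ L v, x ≠ y → HAdj x y
  edges_within : ∀ x y, HAdj x y → ∃ u v, x ∈ L u ∧ y ∈ L v ∧ (u = v ∨ G.Adj u v)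
  matching : ∀ u v, u ≠ v → ∀ x ∈ L u, ((L v).filter fun y => HAdj x y).card ≤ G.e u v

/-- An `(L,H)`-coloring: an independent set of `H` meeting every list in exactly one color. -/
def Cover.IsColoring {G : Multigraph V} {C : Type} (cov : Cover G C) (I : Finset C) : Prop :=
  (∀ x ∈ I, ∃ v, x ∈ cov.L v) ∧
  (∀ x ∈ I, ∀ y ∈ I, ¬ cov.HAdj x y) ∧
  (∀ v, (I ∩ cov.L v).card = 1)

/-- `G` is `(L,H)`-colorable if an `(L,H)`-coloring exists. -/
def Cover.Colorable {G : Multigraph V} {C : Type} (cov : Cover G C) : Prop :=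
  ∃ I, cov.IsColoring I

/-- `G` is DP-degree-colorable if it is `(L,H)`-colorable whenever `|L v| ≥ deg v` for all `v`. -/
def DPDegreeColorable [Fintype V] (G : Multigraph V) : Prop :=
  ∀ (C : Type) (cov : Cover G C), (∀ v, G.deg v ≤ (cov.L v).card) → cov.Colorable

/-- The DP-chromatic number: the least `k` such that `G` is `(L,H)`-colorable for every cover
with all lists of size at least `k`. -/
noncomputable def DPChromatic [Fintype V] (G : Multigraph V) : ℕ :=
  sInf {k | ∀ (C : Type) (cov : Cover G C), (∀ v, k ≤ (cov.L v).card) → cov.Colorable}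

/-- The sub-multigraph of `G` on vertex set `A` with multiplicities `e' ≤ e_G`. -/
def subMG (G : Multigraph V) (A : Finset V) (e' : V → V → ℕ)
    (hsymm : ∀ u v, e' u v = e' v u) (hle : ∀ u v, e' u v ≤ G.e u v) :
    Multigraph {x // x ∈ A} where
  e u v := e' u v
  symm u v := hsymm u v
  loopless v := Nat.le_zero.mp (le_of_le_of_eq (hle v v) (G.loopless v))

/-- `G` is DP-`k`-critical: `χ_DP(G) = k` and every proper sub-multigraph (obtained by deleting
vertices and/or decreasing edge multiplicities) has smaller DP-chromatic number. -/
def DPCritical [Fintype V] (G : Multigraph V) (k : ℕ) : Prop :=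
  DPChromatic G = k ∧
  ∀ (A : Finset V) (e' : V → V → ℕ) (hsymm : ∀ u v, e' u v = e' v u)
    (hle : ∀ u v, e' u v ≤ G.e u v),
    (∀ u v, e' u v ≠ 0 → u ∈ A ∧ v ∈ A) →
    ¬(A = Finset.univ ∧ e' = G.e) →
    DPChromatic (subMG G A e' hsymm hle) < k

/-- `G[B]` is connected and has no cut vertex. -/
def Nonseparable (G : Multigraph V) (B : Set V) : Prop :=
  B.Nonempty ∧ (G.induce B).toSimpleGraph.Connected ∧
    ∀ v ∈ B, (G.induce (B \ {v})).toSimpleGraph.Preconnected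

/-- A block of `G`: a maximal vertex set inducing a connected sub-multigraph with no cut vertex. -/
def IsBlock (G : Multigraph V) (B : Set V) : Prop :=
  Nonseparable G B ∧ ∀ B', B ⊆ B' → Nonseparable G B' → B' = B

/-- `G` is 2-connected: connected, at least two vertices, and deleting any one vertex leaves
it connected. -/
def TwoConnected [Fintype V] (G : Multigraph V) : Prop :=
  G.toSimpleGraph.Connected ∧ 2 ≤ Fintype.card V ∧
    ∀ v : V, (G.induce ({v}ᶜ : Set V)).toSimpleGraph.Connected

end Multigraph

/-- The multigraph `K_n^k`: `n` vertices, every two distinct vertices joined by `k` edges. -/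
def KMG (n k : ℕ) : Multigraph (Fin n) where
  e u v := if u = v then 0 else k
  symm u v := by by_cases h : u = v <;> simp [h, eq_comm]
  loopless v := by simp

/-- The multigraph `C_n^k`: the `n`-cycle with every edge of multiplicity `k`. -/
def CMG (n k : ℕ) : Multigraph (Fin n) where
  e u v := if u ≠ v ∧ ((u.val + 1) % n = v.val ∨ (v.val + 1) % n = u.val) then k else 0
  symm u v := by
    apply if_congr _ rfl rfl
    constructor
    · rintro ⟨h1, h2⟩; exact ⟨h1.symm, h2.symm⟩
    · rintro ⟨h1, h2⟩; exact ⟨h1.symm, h2.symm⟩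
  loopless v := by simp

namespace Multigraph

variable {V C : Type}

/-- `G` is `f`-degenerate. As `G` has no loops, the sum counts the edges from `a` to `T \ {a}`. -/
def IsDegenerate (G : Multigraph V) (f : V → ℕ) : Prop :=
  ∀ T : Finset V, T.Nonempty → ∃ a ∈ T, ∑ v ∈ T, G.e v a < f a

theorem IsDegenerate.mono {G : Multigraph V} {f g : V → ℕ} (hG : G.IsDegenerate f)
    (hfg : ∀ v, f v ≤ g v) : G.IsDegenerate g := fun T hT =>
  (hG T hT).imp fun a ⟨ha, hlt⟩ => ⟨ha, hlt.trans_le (hfg a)⟩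

theorem isDegenerate_of_deg_lt [Fintype V] {G : Multigraph V} {f : V → ℕ}
    (h : ∀ v, G.deg v < f v) : G.IsDegenerate f := by
  rintro T ⟨a, ha⟩
  refine ⟨a, ha, lt_of_le_of_lt ?_ (h a)⟩
  calc ∑ v ∈ T, G.e v a ≤ ∑ v, G.e v a :=
        Finset.sum_le_sum_of_subset (Finset.subset_univ _)
    _ = G.deg a := by simp only [deg, G.symm]

theorem sum_e_le_of_mem {G : Multigraph V} {k : ℕ} (hG : ∀ u v, G.e u v ≤ k) {T : Finset V}
    {a : V} (ha : a ∈ T) : ∑ v ∈ T, G.e v a ≤ (T.card - 1) * k := by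
  rw [← Finset.sum_erase (f := (G.e · a)) T (G.loopless a), ← Finset.card_erase_of_mem ha]
  simpa using Finset.sum_le_card_nsmul _ _ k fun v _ => hG v a

theorem sum_e_lt_of_mem {G : Multigraph V} {k : ℕ} (hG : ∀ u v, G.e u v ≤ k) {T : Finset V}
    {a u : V} (ha : a ∈ T) (hu : u ∈ T) (hua : u ≠ a) (hlt : G.e u a < k) :
    ∑ v ∈ T, G.e v a < (T.card - 1) * k := by
  rw [← Finset.sum_erase (f := (G.e · a)) T (G.loopless a), ← Finset.card_erase_of_mem ha,
    ← smul_eq_mul, ← Finset.sum_const]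
  exact Finset.sum_lt_sum (fun v _ => hG v a) ⟨u, Finset.mem_erase.mpr ⟨hua, hu⟩, hlt⟩

namespace Cover

variable {G : Multigraph V}

theorem colorable_iff_exists_independent_choice [Fintype V] (cov : Cover G C) :
    cov.Colorable ↔ ∃ f : V → C, (∀ v, f v ∈ cov.L v) ∧ ∀ u v, ¬ cov.HAdj (f u) (f v) := by
  constructor
  · rintro ⟨I, -, hind, hone⟩
    have hpick : ∀ v, ∃ x, x ∈ I ∧ x ∈ cov.L v := fun v => by
      obtain ⟨x, hx⟩ := Finset.card_eq_one.mp (hone v)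
      exact ⟨x, Finset.mem_inter.mp (hx ▸ Finset.mem_singleton_self x)⟩
    choose f hfI hfL using hpick
    exact ⟨f, hfL, fun u v => hind _ (hfI u) _ (hfI v)⟩
  · rintro ⟨f, hfL, hind⟩
    refine ⟨Finset.univ.image f, ?_, ?_, fun v => Finset.card_eq_one.mpr ⟨f v, ?_⟩⟩
    · simp only [Finset.mem_image, Finset.mem_univ, true_and, forall_exists_index,
        forall_apply_eq_imp_iff]
      exact fun v => ⟨v, hfL v⟩
    · simp only [Finset.mem_image, Finset.mem_univ, true_and, forall_exists_index,
        forall_apply_eq_imp_iff]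
      exact hind
    · ext x
      simp only [Finset.mem_inter, Finset.mem_image, Finset.mem_univ, true_and,
        Finset.mem_singleton]
      constructor
      · rintro ⟨⟨u, rfl⟩, hu⟩
        by_contra huv
        exact Finset.disjoint_left.mp (cov.disjoint u v fun h => huv (h ▸ rfl)) (hfL u) hu
      · rintro rfl
        exact ⟨⟨v, rfl⟩, hfL v⟩

/-- Each `f v` blocks at most `e(v, a)` colors of `L a`. -/
theorem exists_mem_forall_not_hAdj (cov : Cover G C) {f : V → C} {s : Finset V} {a : V}
    (hf : ∀ v ∈ s, f v ∈ cov.L v) (ha : a ∉ s) (hlt : ∑ v ∈ s, G.e v a < (cov.L a).card) :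
    ∃ y ∈ cov.L a, ∀ v ∈ s, ¬ cov.HAdj (f v) y := by
  set blocked := s.biUnion fun v => (cov.L a).filter fun y => cov.HAdj (f v) y
  have hcard : blocked.card < (cov.L a).card := calc
    blocked.card ≤ ∑ v ∈ s, ((cov.L a).filter fun y => cov.HAdj (f v) y).card :=
      Finset.card_biUnion_le
    _ ≤ ∑ v ∈ s, G.e v a := Finset.sum_le_sum fun v hv =>
      cov.matching v a (fun h => ha (h ▸ hv)) (f v) (hf v hv)
    _ < (cov.L a).card := hlt
  obtain ⟨y, hy, hyb⟩ := Finset.exists_mem_notMem_of_card_lt_card hcard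
  exact ⟨y, hy, fun v hv hadj =>
    hyb (Finset.mem_biUnion.mpr ⟨v, hv, Finset.mem_filter.mpr ⟨hy, hadj⟩⟩)⟩

theorem colorable_of_isDegenerate [Fintype V] (cov : Cover G C)
    (h : G.IsDegenerate fun v => (cov.L v).card) : cov.Colorable := by
  have hne : ∀ v, (cov.L v).Nonempty := fun v => by
    obtain ⟨a, ha, hlt⟩ := h {v} (Finset.singleton_nonempty v)
    rw [Finset.mem_singleton.mp ha] at hlt
    exact Finset.card_pos.mp (Nat.zero_lt_of_lt hlt)
  choose g hg using hne
  suffices hS : ∀ S : Finset V, ∃ f : V → C, (∀ v, f v ∈ cov.L v) ∧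
      ∀ u ∈ S, ∀ v ∈ S, ¬ cov.HAdj (f u) (f v) by
    obtain ⟨f, hfL, hind⟩ := hS Finset.univ
    exact cov.colorable_iff_exists_independent_choice.mpr
      ⟨f, hfL, fun u v => hind u (Finset.mem_univ u) v (Finset.mem_univ v)⟩
  intro S
  induction S using Finset.strongInduction with
  | H S ih =>
  obtain rfl | hS := S.eq_empty_or_nonempty
  · exact ⟨g, hg, by simp⟩
  obtain ⟨a, ha, hlt⟩ := h S hS
  obtain ⟨f, hfL, hind⟩ := ih (S.erase a) (Finset.erase_ssubset ha)
  obtain ⟨y, hyL, hy⟩ :=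
    cov.exists_mem_forall_not_hAdj (fun v _ => hfL v) (Finset.notMem_erase a S)
      ((Finset.sum_erase (f := (G.e · a)) S (G.loopless a)).trans_lt hlt)
  refine ⟨Function.update f a y, fun v => ?_, fun u hu v hv => ?_⟩
  · rcases eq_or_ne v a with rfl | hv
    · simpa using hyL
    · simpa [hv] using hfL v
  rcases eq_or_ne u a with rfl | hua <;> rcases eq_or_ne v u with rfl | hvu
  · exact cov.Hirrefl _
  · simpa [hvu] using fun h => hy v (Finset.mem_erase.mpr ⟨hvu, hv⟩) (cov.Hsymm _ _ h)
  · exact cov.Hirrefl _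
  rcases eq_or_ne v a with rfl | hva
  · simpa [hua] using hy u (Finset.mem_erase.mpr ⟨hua, hu⟩)
  · simpa [hua, hva] using
      hind u (Finset.mem_erase.mpr ⟨hua, hu⟩) v (Finset.mem_erase.mpr ⟨hva, hv⟩)

end Cover

section DPChromatic

variable [Fintype V] {G : Multigraph V}

theorem dpChromatic_le_of_isDegenerate {k : ℕ} (hG : G.IsDegenerate fun _ => k) :
    G.DPChromatic ≤ k :=
  Nat.sInf_le fun _ cov hcard => cov.colorable_of_isDegenerate (hG.mono hcard)

theorem lt_dpChromatic_of_not_colorable {k : ℕ} (cov : Cover G C)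
    (hcard : ∀ v, k ≤ (cov.L v).card) (hcov : ¬ cov.Colorable) : k < G.DPChromatic := by
  have hbounded : {j | ∀ (C : Type) (cov : Cover G C), (∀ v, j ≤ (cov.L v).card) →
      cov.Colorable}.Nonempty :=
    ⟨Finset.univ.sup G.deg + 1, fun _ cov hcard => cov.colorable_of_isDegenerate
      (isDegenerate_of_deg_lt fun v =>
        (Nat.lt_succ_of_le (Finset.le_sup (Finset.mem_univ v))).trans_le (hcard v))⟩
  by_contra! hle
  exact hcov (Nat.sInf_mem hbounded C cov fun v => hle.trans (hcard v))

end DPChromatic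

end Multigraph

section CompleteMultigraph

open Multigraph

variable {n m k : ℕ}

theorem KMG_e_of_ne {u v : Fin n} (h : u ≠ v) : (KMG n k).e u v = k := if_neg h

theorem KMG_e_le (u v : Fin n) : (KMG n k).e u v ≤ k := by
  change ite _ _ _ ≤ k
  split <;> omega

theorem KMG_deg (v : Fin (m + 1)) : (KMG (m + 1) k).deg v = k * m := by
  simp [deg, KMG, Finset.sum_ite, Finset.filter_ne, mul_comm]

/-- The cover of `K_{m+1}^k` with lists `{v} × [k m]`, where each list is cut into `m` blocks of
`k` consecutive colors and colors of distinct lists are joined iff they lie in the same block. -/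
def blockCover (m k : ℕ) (hk : 1 ≤ k) : Cover (KMG (m + 1) k) (Fin (m + 1) × Fin (k * m)) where
  L v := {v} ×ˢ Finset.univ
  HAdj p q := p ≠ q ∧ (p.1 = q.1 ∨ p.2.val / k = q.2.val / k)
  Hsymm _ _ h := ⟨h.1.symm, h.2.imp Eq.symm Eq.symm⟩
  Hirrefl _ h := h.1 rfl
  disjoint u v huv := by
    simpa [Finset.disjoint_left] using fun _ => Ne.symm huv
  cliques v x hx y hy hxy := by
    simp only [Finset.mem_product, Finset.mem_singleton] at hx hy
    exact ⟨hxy, Or.inl (hx.1.trans hy.1.symm)⟩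
  edges_within x y _ := by
    refine ⟨x.1, y.1, by simp, by simp, ?_⟩
    by_cases h : x.1 = y.1
    · exact Or.inl h
    · exact Or.inr ⟨h, by rw [KMG_e_of_ne h]; exact hk⟩
  matching u v huv x hx := by
    rw [KMG_e_of_ne huv]
    -- a neighbor of `x` in `L v` is determined by its position in the block of `x`
    refine (Finset.card_le_card_of_injOn (fun q => q.2.val % k)
      (fun q _ => Finset.mem_range.mpr (Nat.mod_lt _ hk)) ?_).trans (Finset.card_range k).le
    intro q hq q' hq' hmod
    simp only [Finset.coe_filter, Finset.mem_product, Finset.mem_singleton, Finset.mem_univ,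
      and_true] at hx hq hq'
    have hblock : ∀ p : Fin (m + 1) × Fin (k * m),
        p.1 = v ∧ x ≠ p ∧ (x.1 = p.1 ∨ x.2.val / k = p.2.val / k) → x.2.val / k = p.2.val / k :=
      fun p ⟨hp, _, hor⟩ => hor.resolve_left fun h => huv (hx ▸ h.trans hp)
    exact Prod.ext (hq.1.trans hq'.1.symm)
      (Fin.ext (Nat.ext_div_modEq ((hblock q hq).symm.trans (hblock q' hq')) hmod))

theorem blockCover_card (hk : 1 ≤ k) (v : Fin (m + 1)) :
    ((blockCover m k hk).L v).card = k * m := by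
  simp [blockCover]

/-- Pigeonhole: the `m + 1` chosen colors would need pairwise distinct blocks among `m`. -/
theorem blockCover_not_colorable (hk : 1 ≤ k) : ¬ (blockCover m k hk).Colorable := by
  rw [Cover.colorable_iff_exists_independent_choice]
  rintro ⟨f, hfL, hind⟩
  have hf : ∀ v, (f v).1 = v := fun v =>
    Finset.mem_singleton.mp (Finset.mem_product.mp (hfL v)).1
  let block (v : Fin (m + 1)) : Fin m := ⟨(f v).2.val / k, Nat.div_lt_of_lt_mul (f v).2.isLt⟩
  obtain ⟨u, v, huv, hblock⟩ := Fintype.exists_ne_map_eq_of_card_lt block (by simp)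
  exact hind u v ⟨fun h => huv (by rw [← hf u, h, hf v]), Or.inr (Fin.mk.inj_iff.mp hblock)⟩

theorem KMG_exists_lt_of_ne {e' : Fin n → Fin n → ℕ} (hle : ∀ u v, e' u v ≤ (KMG n k).e u v)
    (hne : e' ≠ (KMG n k).e) : ∃ u v, u ≠ v ∧ e' u v < k := by
  obtain ⟨u, v, huv⟩ : ∃ u v, e' u v ≠ (KMG n k).e u v := by
    by_contra! h
    exact hne (funext₂ h)
  refine ⟨u, v, fun h => huv ?_, (lt_of_le_of_ne (hle u v) huv).trans_le (KMG_e_le u v)⟩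
  subst h
  exact le_antisymm (hle u u) (by rw [(KMG n k).loopless]; exact Nat.zero_le _)

theorem isDegenerate_subMG_KMG (hk : 1 ≤ k) {A : Finset (Fin (m + 1))}
    {e' : Fin (m + 1) → Fin (m + 1) → ℕ} (hsymm : ∀ u v, e' u v = e' v u)
    (hle : ∀ u v, e' u v ≤ (KMG (m + 1) k).e u v)
    (hne : ¬(A = Finset.univ ∧ e' = (KMG (m + 1) k).e)) :
    (subMG (KMG (m + 1) k) A e' hsymm hle).IsDegenerate fun _ => k * m := by
  set H := subMG (KMG (m + 1) k) A e' hsymm hle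
  have hH : ∀ u v, H.e u v ≤ k := fun u v => (hle u v).trans (KMG_e_le (u : Fin (m + 1)) v)
  intro T hT
  have hTA : T.card ≤ A.card := T.card_le_univ.trans_eq (Fintype.card_coe A)
  have hAle : A.card ≤ m + 1 := A.card_le_univ.trans_eq (Fintype.card_fin _)
  rcases (hTA.trans hAle).lt_or_eq with hTlt | hTeq
  · obtain ⟨a, ha⟩ := hT
    have hTpos : 0 < T.card := Finset.card_pos.mpr ⟨a, ha⟩
    refine ⟨a, ha, ?_⟩
    calc ∑ v ∈ T, H.e v a ≤ (T.card - 1) * k := sum_e_le_of_mem hH ha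
      _ < m * k := Nat.mul_lt_mul_of_pos_right (by omega) hk
      _ = k * m := mul_comm m k
  · have hAuniv : A = Finset.univ := Finset.eq_univ_of_card A (by rw [Fintype.card_fin]; omega)
    have hTuniv : T = Finset.univ := Finset.eq_univ_of_card T (by rw [Fintype.card_coe]; omega)
    obtain ⟨u, v, huv, hlt⟩ := KMG_exists_lt_of_ne hle fun h => hne ⟨hAuniv, h⟩
    have hmem : ∀ w : {x // x ∈ A}, w ∈ T := fun w => hTuniv ▸ Finset.mem_univ w
    let u' : {x // x ∈ A} := ⟨u, hAuniv ▸ Finset.mem_univ u⟩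
    let v' : {x // x ∈ A} := ⟨v, hAuniv ▸ Finset.mem_univ v⟩
    refine ⟨v', hmem v', ?_⟩
    calc ∑ w ∈ T, H.e w v' < (T.card - 1) * k :=
          sum_e_lt_of_mem hH (hmem v') (hmem u') (Subtype.coe_ne_coe.mp huv) hlt
      _ = k * m := by rw [hTeq, Nat.add_sub_cancel, mul_comm]

end CompleteMultigraph

open Multigraph in
/-- For `n ≥ 2` and `k ≥ 1`, the multigraph `K_n^k` is DP-`(k(n-1)+1)`-critical:
`χ_DP(K_n^k) = k(n-1)+1` and every proper sub-multigraph has smaller DP-chromatic number. -/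
theorem statement18 (n k : ℕ) (hn : 2 ≤ n) (hk : 1 ≤ k) :
    DPCritical (KMG n k) (k * (n - 1) + 1) := by
  obtain ⟨m, rfl⟩ : ∃ m, n = m + 1 := ⟨n - 1, by omega⟩
  rw [Nat.add_sub_cancel]
  refine ⟨le_antisymm ?_ ?_, fun A e' hsymm hle _ hne => ?_⟩
  · exact dpChromatic_le_of_isDegenerate
      (isDegenerate_of_deg_lt fun v => by rw [KMG_deg]; exact Nat.lt_succ_self _)
  · exact lt_dpChromatic_of_not_colorable (blockCover m k hk)
      (fun v => (blockCover_card hk v).ge) (blockCover_not_colorable hk)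
  · exact Nat.lt_succ_of_le
      (dpChromatic_le_of_isDegenerate (isDegenerate_subMG_KMG hk hsymm hle hne))
end

section
/- For all n ≥ 3 and k ≥ 1, the multigraph C_n^k is DP-(2k+1)-critical: χ_DP(C_n^k) = 2k+1, and every proper sub-multigraph of C_n^k has DP-chromatic number less than 2k+1. -/
open scoped Classical

/-!
Greedy coloring succeeds as soon as, in some vertex order, each vertex has fewer edges to earlier
vertices than it has colors. In `C_n^k` every degree is `2k`. In a proper sub-multigraph pick a
vertex `m` that was deleted or whose edge to `m + 1` was thinned, and order the cycle starting at
`m + 1`: every vertex then has at most `k` edges backwards, except `m`, which has at most `2k - 1`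
edges in total.

For the lower bound take the `k`-fold blow-up of the double cover of the cycle twisted on a single
edge. A coloring of it would be a `ZMod 2`-potential whose differences along the cycle add up to
the twist `1`, while such differences telescope to `0`.
-/

namespace Multigraph

variable {V C : Type}

namespace Cover

variable {G : Multigraph V} (cov : G.Cover C)

theorem colorable_iff [Fintype V] :
    cov.Colorable ↔ ∃ φ : V → C, (∀ v, φ v ∈ cov.L v) ∧ ∀ u v, ¬ cov.HAdj (φ u) (φ v) := by
  constructor
  · rintro ⟨I, -, hind, hcard⟩
    choose φ hφ using fun v => Finset.card_eq_one.mp (hcard v)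
    have hmem : ∀ v, φ v ∈ I ∩ cov.L v := fun v => hφ v ▸ Finset.mem_singleton_self _
    exact ⟨φ, fun v => (Finset.mem_inter.mp (hmem v)).2,
      fun u v => hind _ (Finset.mem_inter.mp (hmem u)).1 _ (Finset.mem_inter.mp (hmem v)).1⟩
  · rintro ⟨φ, hφL, hφ⟩
    refine ⟨Finset.univ.image φ, ?_, ?_, fun v => Finset.card_eq_one.mpr ⟨φ v, ?_⟩⟩
    · simp only [Finset.mem_image, Finset.mem_univ, true_and, forall_exists_index,
        forall_apply_eq_imp_iff]
      exact fun v => ⟨v, hφL v⟩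
    · simp only [Finset.mem_image, Finset.mem_univ, true_and, forall_exists_index,
        forall_apply_eq_imp_iff]
      exact hφ
    · ext x
      simp only [Finset.mem_inter, Finset.mem_image, Finset.mem_univ, true_and,
        Finset.mem_singleton]
      constructor
      · rintro ⟨⟨u, rfl⟩, hu⟩
        by_contra huv
        exact Finset.disjoint_left.mp (cov.disjoint u v fun h => huv (h ▸ rfl)) (hφL u) hu
      · rintro rfl
        exact ⟨⟨v, rfl⟩, hφL v⟩

theorem card_filter_exists_adj_le (φ : V → C) {s : Finset V} (hφ : ∀ u ∈ s, φ u ∈ cov.L u)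
    {a : V} (ha : a ∉ s) :
    ((cov.L a).filter fun x => ∃ u ∈ s, cov.HAdj (φ u) x).card ≤ ∑ u ∈ s, G.e a u := by
  have hsub : ((cov.L a).filter fun x => ∃ u ∈ s, cov.HAdj (φ u) x) ⊆
      s.biUnion fun u => (cov.L a).filter (cov.HAdj (φ u)) := by
    intro x hx
    simp only [Finset.mem_filter, Finset.mem_biUnion] at hx ⊢
    obtain ⟨hxL, u, hu, hadj⟩ := hx
    exact ⟨u, hu, hxL, hadj⟩
  calc _ ≤ ∑ u ∈ s, ((cov.L a).filter (cov.HAdj (φ u))).card :=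
        (Finset.card_le_card hsub).trans Finset.card_biUnion_le
    _ ≤ ∑ u ∈ s, G.e a u := Finset.sum_le_sum fun u hu => by
        rw [G.symm]
        exact cov.matching u a (fun h => ha (h ▸ hu)) _ (hφ u hu)

theorem colorable_of_rank [Fintype V] {α : Type} [LinearOrder α] (r : V → α)
    (hr : Function.Injective r)
    (h : ∀ v, ∑ u ∈ Finset.univ.filter (fun u => r u < r v), G.e v u < (cov.L v).card) :
    cov.Colorable := by
  choose φ₀ hφ₀ using fun v => Finset.card_pos.mp (pos_of_gt (h v))
  suffices ∀ s : Finset V, ∃ φ : V → C, (∀ v ∈ s, φ v ∈ cov.L v) ∧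
      ∀ u ∈ s, ∀ v ∈ s, ¬ cov.HAdj (φ u) (φ v) by
    obtain ⟨φ, hφL, hφ⟩ := this Finset.univ
    exact (colorable_iff cov).mpr
      ⟨φ, fun v => hφL v (Finset.mem_univ v),
        fun u v => hφ u (Finset.mem_univ u) v (Finset.mem_univ v)⟩
  intro s
  induction s using Finset.induction_on_max_value r with
  | empty => exact ⟨φ₀, by simp, by simp⟩
  | insert a s ha hmax ih =>
    obtain ⟨φ, hφL, hφ⟩ := ih
    have hpred : s ⊆ Finset.univ.filter fun u => r u < r a := fun u hu =>
      Finset.mem_filter.mpr ⟨Finset.mem_univ u,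
        (hmax u hu).lt_of_ne fun h => ha (hr h ▸ hu)⟩
    have hfree : ((cov.L a).filter fun x => ∃ u ∈ s, cov.HAdj (φ u) x).card < (cov.L a).card :=
      calc _ ≤ ∑ u ∈ s, G.e a u := cov.card_filter_exists_adj_le φ hφL ha
        _ ≤ _ := Finset.sum_le_sum_of_subset hpred
        _ < _ := h a
    obtain ⟨x, hxL, hx⟩ := Finset.exists_mem_notMem_of_card_lt_card hfree
    simp only [Finset.mem_filter, hxL, true_and, not_exists, not_and] at hx
    set ψ := Function.update φ a x
    have hψa : ψ a = x := Function.update_self a x φ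
    have hψs : ∀ v ∈ s, ψ v = φ v :=
      fun v hv => Function.update_of_ne (ne_of_mem_of_not_mem hv ha) _ _
    refine ⟨ψ, ?_, ?_⟩
    · simp only [Finset.forall_mem_insert, hψa]
      exact ⟨hxL, fun v hv => hψs v hv ▸ hφL v hv⟩
    · simp only [Finset.forall_mem_insert, hψa]
      refine ⟨⟨cov.Hirrefl x, fun v hv hadj => hx v hv ?_⟩, fun u hu => ⟨?_, fun v hv => ?_⟩⟩
      · exact cov.Hsymm _ _ (hψs v hv ▸ hadj)
      · exact hψs u hu ▸ hx u hu
      · rw [hψs u hu, hψs v hv]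
        exact hφ u hu v hv

theorem colorable_of_deg_lt [Fintype V] (h : ∀ v, G.deg v < (cov.L v).card) : cov.Colorable :=
  cov.colorable_of_rank (Fintype.equivFin V) (Fintype.equivFin V).injective fun v =>
    (Finset.sum_le_sum_of_subset (Finset.filter_subset _ _)).trans_lt (h v)

end Cover

theorem DPChromatic_le [Fintype V] {G : Multigraph V} {K : ℕ}
    (h : ∀ (C : Type) (cov : G.Cover C), (∀ v, K ≤ (cov.L v).card) → cov.Colorable) :
    G.DPChromatic ≤ K :=
  Nat.sInf_le h

theorem DPChromatic_eq_succ [Fintype V] {G : Multigraph V} {K : ℕ}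
    (h : ∀ (C : Type) (cov : G.Cover C), (∀ v, K + 1 ≤ (cov.L v).card) → cov.Colorable)
    (cov : G.Cover C) (hL : ∀ v, K ≤ (cov.L v).card) (hcov : ¬ cov.Colorable) :
    G.DPChromatic = K + 1 := by
  refine (DPChromatic_le h).antisymm (Nat.succ_le_of_lt (lt_of_not_ge fun hle => hcov ?_))
  exact Nat.sInf_mem (s := {m | ∀ (C : Type) (cov : G.Cover C), (∀ v, m ≤ (cov.L v).card) →
    cov.Colorable}) ⟨K + 1, h⟩ C cov fun v => hle.trans (hL v)

/-- The `k`-fold blow-up of the signed double cover given by a `ZMod 2`-valued gain `t`: the color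
`(v, a, i)` conflicts with `(w, b, j)` across an edge `vw` unless `b = a + t v w`. -/
def gainCover (G : Multigraph V) (k : ℕ) (t : V → V → ZMod 2) (ht : ∀ u v, t u v = t v u)
    (hk : ∀ u v, G.Adj u v → k ≤ G.e u v) : G.Cover (V × ZMod 2 × Fin k) where
  L v := {v} ×ˢ Finset.univ
  HAdj x y := (x.1 = y.1 ∧ x ≠ y) ∨ (G.Adj x.1 y.1 ∧ y.2.1 ≠ x.2.1 + t x.1 y.1)
  Hsymm x y := by
    rintro (⟨h, hne⟩ | ⟨hadj, hne⟩)
    · exact Or.inl ⟨h.symm, hne.symm⟩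
    · refine Or.inr ⟨(G.toSimpleGraph.adj_symm hadj : G.Adj y.1 x.1), fun h => hne ?_⟩
      rw [h, ht, add_assoc, CharTwo.add_self_eq_zero, add_zero]
  Hirrefl x := by
    rintro (⟨-, hne⟩ | ⟨hadj, -⟩)
    exacts [hne rfl, hadj.1 rfl]
  disjoint u v huv := by
    simp only [Finset.disjoint_left, Finset.mem_product, Finset.mem_singleton]
    exact fun x hu hv => huv (hu.1.symm.trans hv.1)
  cliques v x hx y hy hxy := by
    simp only [Finset.mem_product, Finset.mem_singleton] at hx hy
    exact Or.inl ⟨hx.1.trans hy.1.symm, hxy⟩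
  edges_within x y := by
    rintro (⟨h, -⟩ | ⟨hadj, -⟩)
    · exact ⟨x.1, x.1, by simp, by simp [h], Or.inl rfl⟩
    · exact ⟨x.1, y.1, by simp, by simp, Or.inr hadj⟩
  matching u v huv x hx := by
    simp only [Finset.mem_product, Finset.mem_singleton] at hx
    by_cases hadj : G.Adj u v
    · refine le_trans ?_ (hk u v hadj)
      calc _ ≤ ({v} ×ˢ {x.2.1 + t u v + 1} ×ˢ Finset.univ : Finset (V × ZMod 2 × Fin k)).card := by
            refine Finset.card_le_card fun y hy => ?_
            simp only [Finset.mem_filter, Finset.mem_product, Finset.mem_singleton] at hy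
            obtain ⟨⟨hyv, -⟩, ⟨hxy, -⟩ | ⟨-, hne⟩⟩ := hy
            · exact absurd (hx.1.symm.trans (hxy.trans hyv)) huv
            · simp only [Finset.mem_product, Finset.mem_singleton, Finset.mem_univ, and_true]
              have hne_add_one : ∀ b c : ZMod 2, b ≠ c → b = c + 1 := by decide
              exact ⟨hyv, by rw [hx.1, hyv] at hne; exact hne_add_one _ _ hne⟩
        _ = k := by simp
    · convert Nat.zero_le (G.e u v)
      refine Finset.card_eq_zero.mpr (Finset.eq_empty_of_forall_notMem fun y hy => ?_)
      simp only [Finset.mem_filter, Finset.mem_product, Finset.mem_singleton] at hy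
      obtain ⟨⟨hyv, -⟩, ⟨h, -⟩ | ⟨h, -⟩⟩ := hy
      · exact huv (hx.1.symm.trans (h.trans hyv))
      · exact hadj (hx.1 ▸ hyv ▸ h)

theorem card_gainCover_L (G : Multigraph V) (k : ℕ) (t : V → V → ZMod 2)
    (ht : ∀ u v, t u v = t v u) (hk : ∀ u v, G.Adj u v → k ≤ G.e u v) (v : V) :
    ((gainCover G k t ht hk).L v).card = 2 * k := by
  simp [gainCover]

theorem exists_balanced_of_gainCover_colorable [Fintype V] {G : Multigraph V} {k : ℕ}
    {t : V → V → ZMod 2} {ht : ∀ u v, t u v = t v u} {hk : ∀ u v, G.Adj u v → k ≤ G.e u v}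
    (hcol : (gainCover G k t ht hk).Colorable) :
    ∃ f : V → ZMod 2, ∀ u v, G.Adj u v → f v = f u + t u v := by
  obtain ⟨φ, hφL, hφ⟩ := (Cover.colorable_iff _).mp hcol
  have hφv : ∀ v, (φ v).1 = v :=
    fun v => Finset.mem_singleton.mp (Finset.mem_product.mp (hφL v)).1
  refine ⟨fun v => (φ v).2.1, fun u v hadj => ?_⟩
  by_contra hne
  exact hφ u v (Or.inr ⟨by rwa [hφv, hφv], by rwa [hφv, hφv]⟩)

end Multigraph

open Multigraph

theorem Finset.sum_subtype_filter_lt_le {α β : Type} [Fintype α] [LinearOrder β] (s : Finset α)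
    (g : α → β) (b : β) (f : α → ℕ) :
    ∑ u ∈ (Finset.univ : Finset s).filter (fun u => g u.1 < b), f u.1 ≤
      ∑ u ∈ Finset.univ.filter (fun u => g u < b), f u :=
  calc _ = ∑ u : s, if g u < b then f u else 0 := Finset.sum_filter _ _
    _ = ∑ u ∈ s, if g u < b then f u else 0 :=
        Finset.sum_coe_sort s fun u => if g u < b then f u else 0
    _ ≤ ∑ u, if g u < b then f u else 0 := Finset.sum_le_sum_of_subset (Finset.subset_univ s)
    _ = _ := (Finset.sum_filter _ _).symm

section Cycle

theorem CMG_e_le {n k : ℕ} (u v : Fin n) : (CMG n k).e u v ≤ k := by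
  show (if _ then k else 0) ≤ k
  split <;> omega

theorem CMG_e_of_adj {n k : ℕ} {u v : Fin n} (h : (CMG n k).Adj u v) : (CMG n k).e u v = k := by
  obtain ⟨-, h⟩ := h
  revert h
  show 1 ≤ (if _ then k else 0) → (if _ then k else 0) = k
  split <;> omega

variable {n k : ℕ} [NeZero n]

theorem CMG_e_eq (u v : Fin n) :
    (CMG n k).e u v = if u ≠ v ∧ (u + 1 = v ∨ v + 1 = u) then k else 0 := by
  have hsucc : ∀ a b : Fin n, (a.val + 1) % n = b.val ↔ a + 1 = b := fun a b => by
    rw [Fin.ext_iff, Fin.val_add, Fin.val_one', Nat.add_mod_mod]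
  simp only [CMG, hsucc]

theorem eq_add_one_or_of_CMG_e_ne_zero {u v : Fin n} (h : (CMG n k).e u v ≠ 0) :
    v = u + 1 ∨ u = v + 1 := by
  rw [CMG_e_eq] at h
  split at h
  · rename_i hc
    exact hc.2.imp Eq.symm Eq.symm
  · exact absurd rfl h

theorem CMG_adj_add_one (hn : 2 ≤ n) (hk : 1 ≤ k) (u : Fin n) : (CMG n k).Adj u (u + 1) := by
  have hne : u ≠ u + 1 := fun h => by
    have h1 : (1 : Fin n) = 0 := by simpa using h.symm
    rw [Fin.one_eq_zero_iff] at h1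
    omega
  refine ⟨hne, ?_⟩
  rw [CMG_e_eq, if_pos ⟨hne, Or.inl rfl⟩]
  exact hk

theorem sum_le_of_le_CMG {e' : Fin n → Fin n → ℕ} (hle : ∀ u v, e' u v ≤ (CMG n k).e u v)
    (v : Fin n) (s : Finset (Fin n)) :
    ∑ u ∈ s, e' v u ≤ e' v (v + 1) + e' v (v - 1) := by
  calc ∑ u ∈ s, e' v u ≤ ∑ u ∈ {v + 1, v - 1}, e' v u := by
        refine Finset.sum_le_sum_of_ne_zero fun u _ hu => ?_
        have hCMG : (CMG n k).e v u ≠ 0 := fun h => hu (Nat.le_zero.mp (h ▸ hle v u))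
        rcases eq_add_one_or_of_CMG_e_ne_zero hCMG with rfl | rfl <;> simp
    _ ≤ e' v (v + 1) + e' v (v - 1) := by
        rcases eq_or_ne (v + 1) (v - 1) with h | h
        · simp [h]
        · rw [Finset.sum_pair h]

theorem sum_filter_sub_lt_le_of_le_CMG {e' : Fin n → Fin n → ℕ}
    (hle : ∀ u v, e' u v ≤ (CMG n k).e u v) {m v : Fin n} (hvm : v ≠ m) :
    ∑ u ∈ Finset.univ.filter (fun u => u - m - 1 < v - m - 1), e' v u ≤ e' v (v - 1) := by
  calc _ ≤ ∑ u ∈ {v - 1}, e' v u := by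
        refine Finset.sum_le_sum_of_ne_zero fun u hu he => ?_
        have hCMG : (CMG n k).e v u ≠ 0 := fun h => he (Nat.le_zero.mp (h ▸ hle v u))
        rcases eq_add_one_or_of_CMG_e_ne_zero hCMG with rfl | rfl
        · -- the rank increases from `v` to `v + 1`, since `v` is not the last vertex `m`
          have hlast : v - m - 1 ≠ -1 := by
            rwa [ne_eq, sub_eq_neg_self, sub_eq_zero]
          have hlt := (lt_finRotate_iff_ne_neg_one _).mpr hlast
          rw [finRotate_apply] at hlt
          simp only [Finset.mem_filter, Finset.mem_univ, true_and] at hu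
          rw [show v + 1 - m - 1 = v - m - 1 + 1 by abel] at hu
          exact absurd (hu.trans hlt) (lt_irrefl _)
        · simp
    _ = e' v (v - 1) := Finset.sum_singleton _ _

theorem CMG_cover_colorable {C : Type} (cov : (CMG n k).Cover C)
    (hL : ∀ v, 2 * k + 1 ≤ (cov.L v).card) : cov.Colorable :=
  cov.colorable_of_deg_lt fun v => Nat.lt_of_lt_of_le (Nat.lt_succ_of_le <|
    calc (CMG n k).deg v ≤ (CMG n k).e v (v + 1) + (CMG n k).e v (v - 1) :=
          sum_le_of_le_CMG (fun _ _ => le_rfl) v Finset.univ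
      _ ≤ 2 * k := by linarith [CMG_e_le (k := k) v (v + 1), CMG_e_le (k := k) v (v - 1)]) (hL v)

theorem exists_notMem_or_lt_of_proper {A : Finset (Fin n)} {e' : Fin n → Fin n → ℕ}
    (hsymm : ∀ u v, e' u v = e' v u) (hle : ∀ u v, e' u v ≤ (CMG n k).e u v)
    (hproper : ¬(A = Finset.univ ∧ e' = (CMG n k).e)) : ∃ m, m ∉ A ∨ e' m (m + 1) < k := by
  by_cases hA : A = Finset.univ
  · obtain ⟨u, v, huv⟩ : ∃ u v, e' u v ≠ (CMG n k).e u v := by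
      by_contra! h
      exact hproper ⟨hA, funext₂ h⟩
    have hlt : e' u v < (CMG n k).e u v := (hle u v).lt_of_ne huv
    have hk : (CMG n k).e u v ≤ k := CMG_e_le u v
    rcases eq_add_one_or_of_CMG_e_ne_zero (k := k) (u := u) (v := v) (by omega) with rfl | rfl
    · exact ⟨u, Or.inr (by omega)⟩
    · exact ⟨v, Or.inr (by rw [← hsymm]; omega)⟩
  · obtain ⟨m, hm⟩ := not_forall.mp (mt Finset.eq_univ_iff_forall.mpr hA)
    exact ⟨m, Or.inl hm⟩

theorem subMG_cover_colorable (hk : 1 ≤ k) {A : Finset (Fin n)} {e' : Fin n → Fin n → ℕ}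
    (hsymm : ∀ u v, e' u v = e' v u) (hle : ∀ u v, e' u v ≤ (CMG n k).e u v) {m : Fin n}
    (hm : m ∉ A ∨ e' m (m + 1) < k) {C : Type} (cov : ((CMG n k).subMG A e' hsymm hle).Cover C)
    (hL : ∀ v, 2 * k ≤ (cov.L v).card) : cov.Colorable := by
  -- order the vertices cyclically so that `m` comes last
  refine cov.colorable_of_rank (fun u => (u : Fin n) - m - 1)
    (fun a b h => Subtype.ext (by simpa using h)) fun v => lt_of_lt_of_le ?_ (hL v)
  refine (Finset.sum_subtype_filter_lt_le A (fun u => u - m - 1) (v - m - 1) (e' v)).trans_lt ?_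
  by_cases hvm : (v : Fin n) = m
  · have hdef : e' m (m + 1) < k := hm.resolve_left fun h => h (hvm ▸ v.2)
    calc _ ≤ e' v (v + 1) + e' v (v - 1) := sum_le_of_le_CMG hle _ _
      _ < 2 * k := by rw [hvm]; linarith [hle m (m - 1), CMG_e_le (k := k) m (m - 1)]
  · calc _ ≤ e' v (v - 1) := sum_filter_sub_lt_le_of_le_CMG hle hvm
      _ ≤ k := (hle _ _).trans (CMG_e_le _ _)
      _ < 2 * k := by omega

variable (n) in
def cycleGain (u v : Fin n) : ZMod 2 := if s(u, v) = s(-1, 0) then 1 else 0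

theorem cycleGain_symm (u v : Fin n) : cycleGain n u v = cycleGain n v u := by
  simp only [cycleGain, Sym2.eq_swap]

theorem sum_cycleGain_add_one (hn : 3 ≤ n) : ∑ u, cycleGain n u (u + 1) = 1 := by
  have hgain : ∀ u : Fin n, cycleGain n u (u + 1) = if u = -1 then 1 else 0 := fun u => by
    refine if_congr ⟨fun h => ?_, fun h => ?_⟩ rfl rfl
    · rcases Sym2.eq_iff.mp h with ⟨h, -⟩ | ⟨rfl, h⟩
      · exact h
      · rw [zero_add] at h
        have h2 := congrArg Fin.val (eq_neg_iff_add_eq_zero.mp h)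
        rw [Fin.val_add, Fin.val_one', Nat.mod_eq_of_lt (by omega : 1 < n),
          Nat.mod_eq_of_lt (by omega : 2 < n), Fin.val_zero] at h2
        omega
    · rw [h, neg_add_cancel]
  simp only [hgain, Finset.sum_ite_eq', Finset.mem_univ, if_true]

variable (n k) in
def cycleCover : (CMG n k).Cover (Fin n × ZMod 2 × Fin k) :=
  gainCover (CMG n k) k (cycleGain n) cycleGain_symm fun _ _ h => (CMG_e_of_adj h).ge

theorem cycleCover_not_colorable (hn : 3 ≤ n) (hk : 1 ≤ k) : ¬ (cycleCover n k).Colorable := by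
  intro hcol
  obtain ⟨f, hf⟩ := exists_balanced_of_gainCover_colorable hcol
  have hstep : ∀ u, f (u + 1) - f u = cycleGain n u (u + 1) := fun u => by
    rw [hf u (u + 1) (CMG_adj_add_one (by omega) hk u), add_sub_cancel_left]
  have htelescope : ∑ u, (f (u + 1) - f u) = 0 := by
    rw [Finset.sum_sub_distrib, sub_eq_zero]
    exact Equiv.sum_comp (Equiv.addRight 1) f
  simp only [hstep, sum_cycleGain_add_one hn] at htelescope
  exact one_ne_zero htelescope

end Cycle

open Multigraph in
/-- For `n ≥ 3` and `k ≥ 1`, the multigraph `C_n^k` is DP-`(2k+1)`-critical: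
`χ_DP(C_n^k) = 2k+1` and every proper sub-multigraph has smaller DP-chromatic number. -/
theorem statement19 (n k : ℕ) (hn : 3 ≤ n) (hk : 1 ≤ k) :
    DPCritical (CMG n k) (2 * k + 1) := by
  have : NeZero n := ⟨by omega⟩
  refine ⟨DPChromatic_eq_succ (fun _ cov hL => CMG_cover_colorable cov hL) (cycleCover n k)
    (fun v => (card_gainCover_L _ _ _ _ _ v).ge) (cycleCover_not_colorable hn hk), ?_⟩
  intro A e' hsymm hle _ hproper
  obtain ⟨m, hm⟩ := exists_notMem_or_lt_of_proper hsymm hle hproper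
  exact Nat.lt_succ_of_le
    (DPChromatic_le fun _ cov hL => subMG_cover_colorable hk hsymm hle hm cov hL)
end
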